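/- arXiv:math/0104224 — 6 statements merged into one kernel-verified Lean document; each statement's English description precedes it below -/
import Mathlib

section
/- Let n ≥ 1 and let p, q, s be integers. The group presented by generators x_1, ..., x_{2n} and relators x_{2i-1}^q x_{2i}^{-1} x_{2i+1}^{-q} and x_{2i}^s x_{2i+1}^p x_{2i+2}^{-s} for i = 1, ..., n (subscripts mod 2n) is isomorphic to the group presented by generators z_1, ..., z_n and relators z_i^p (z_i^{-q} z_{i+1}^q)^s (z_i^{-q} z_{i-1}^q)^s for i = 1, ..., n (subscripts mod n). -/
/-!
The first family of relators says `x_{2k+2} = x_{2k+3}^{-q} x_{2k+1}^q`, so the even-indexed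
generators can be eliminated. Substituting this into the second family turns
`x_{2k+2}^s x_{2k+3}^p x_{2k+4}^{-s}`, after a cyclic permutation, into the cyclic relator at
`z_{k+1}`, where `z_k = x_{2k+1}`. Hence `x_{2k+1} ↦ z_k`, `x_{2k+2} ↦ z_{k+1}^{-q} z_k^q` and
`z_k ↦ x_{2k+1}` define mutually inverse isomorphisms.
-/

namespace ZMod

theorem natCast_two_mul_mod_add (n k j : ℕ) :
    ((2 * (k % n) + j : ℕ) : ZMod (2 * n)) = ((2 * k + j : ℕ) : ZMod (2 * n)) := by
  rw [natCast_eq_natCast_iff]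
  exact ((Nat.mod_modEq k n).mul_left' 2).add_right j

theorem val_natCast_two_mul_add {n : ℕ} [NeZero n] (k : ℕ) {j : ℕ} (hj : j < 2) :
    ((2 * k + j : ℕ) : ZMod (2 * n)).val = 2 * (k % n) + j := by
  have hkn : k % n < n := Nat.mod_lt _ (NeZero.pos n)
  rw [← natCast_two_mul_mod_add, val_natCast_of_lt (by omega)]

theorem exists_eq_two_mul_add_one_or_two {n : ℕ} [NeZero n] (a : ZMod (2 * n)) :
    ∃ k : ℕ,
      a = ((2 * k + 1 : ℕ) : ZMod (2 * n)) ∨ a = ((2 * k + 2 : ℕ) : ZMod (2 * n)) := by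
  have ha : a = ((a - 1).val : ZMod (2 * n)) + 1 := by rw [natCast_zmod_val, sub_add_cancel]
  rcases Nat.even_or_odd' (a - 1).val with ⟨k, hk | hk⟩
  · exact ⟨k, .inl (by rw [ha, hk]; push_cast; ring)⟩
  · exact ⟨k, .inr (by rw [ha, hk]; push_cast; ring)⟩

end ZMod

section Algebra
variable {G : Type*} [Group G]

theorem zpow_mul_inv_mul_zpow_neg_eq_one_iff {a b c : G} {q : ℤ} :
    a ^ q * b ^ (-1 : ℤ) * c ^ (-q) = 1 ↔ b = c ^ (-q) * a ^ q := by
  rw [zpow_neg_one, mul_eq_one_iff_eq_inv, mul_inv_eq_iff_eq_mul, eq_inv_mul_iff_mul_eq, eq_comm]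

theorem cyclic_relator_eq_one_iff (a b c : G) (p q s : ℤ) :
    a ^ p * (a ^ (-q) * c ^ q) ^ s * (a ^ (-q) * b ^ q) ^ s = 1 ↔
      (a ^ (-q) * b ^ q) ^ s * a ^ p * (c ^ (-q) * a ^ q) ^ (-s) = 1 := by
  have hinv : (c ^ (-q) * a ^ q) ^ (-s) = (a ^ (-q) * c ^ q) ^ s := by
    rw [zpow_neg, ← inv_zpow, mul_inv_rev, ← zpow_neg, ← zpow_neg, neg_neg]
  rw [hinv, mul_eq_one_comm, ← mul_assoc]

end Algebra

namespace PresentedGroup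
variable {α β : Type*} {rels : Set (FreeGroup α)}

theorem lift_of_eq_one_of_mem {r : FreeGroup α} (hr : r ∈ rels) :
    FreeGroup.lift (of : α → PresentedGroup rels) r = 1 := by
  rw [show FreeGroup.lift (of : α → PresentedGroup rels) = mk rels from
    FreeGroup.ext_hom _ _ fun _ => by simp [of]]
  exact one_of_mem hr

def mulEquivOfGenerators {rels₁ : Set (FreeGroup α)} {rels₂ : Set (FreeGroup β)}
    {f : α → PresentedGroup rels₂} {g : β → PresentedGroup rels₁}
    (hf : ∀ r ∈ rels₁, FreeGroup.lift f r = 1)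
    (hg : ∀ r ∈ rels₂, FreeGroup.lift g r = 1)
    (hgf : ∀ a, toGroup hg (f a) = of a) (hfg : ∀ b, toGroup hf (g b) = of b) :
    PresentedGroup rels₁ ≃* PresentedGroup rels₂ :=
  MonoidHom.toMulEquiv (toGroup hf) (toGroup hg)
    (ext fun a => by simp [toGroup.of, hgf]) (ext fun b => by simp [toGroup.of, hfg])

end PresentedGroup

namespace PeriodicTakahashi

variable (n : ℕ) (p q s : ℤ)

def geometricRels : Set (FreeGroup (ZMod (2 * n))) :=
  (Set.range fun i : Fin n =>
    (FreeGroup.of (((2 * (i : ℕ) + 1 : ℕ) : ZMod (2 * n)))) ^ q *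
      (FreeGroup.of (((2 * (i : ℕ) + 2 : ℕ) : ZMod (2 * n)))) ^ (-1 : ℤ) *
      (FreeGroup.of (((2 * (i : ℕ) + 3 : ℕ) : ZMod (2 * n)))) ^ (-q)) ∪
  (Set.range fun i : Fin n =>
    (FreeGroup.of (((2 * (i : ℕ) + 2 : ℕ) : ZMod (2 * n)))) ^ s *
      (FreeGroup.of (((2 * (i : ℕ) + 3 : ℕ) : ZMod (2 * n)))) ^ p *
      (FreeGroup.of (((2 * (i : ℕ) + 4 : ℕ) : ZMod (2 * n)))) ^ (-s))

def cyclicRels : Set (FreeGroup (ZMod n)) :=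
  Set.range fun i : ZMod n =>
    (FreeGroup.of i) ^ p * ((FreeGroup.of i) ^ (-q) * (FreeGroup.of (i + 1)) ^ q) ^ s *
      ((FreeGroup.of i) ^ (-q) * (FreeGroup.of (i - 1)) ^ q) ^ s

def toCyclicGen (a : ZMod (2 * n)) : PresentedGroup (cyclicRels n p q s) :=
  let k : ZMod n := (a.val / 2 : ℕ)
  if a.val % 2 = 1 then .of k else .of k ^ (-q) * .of (k - 1) ^ q

def toGeometricGen (j : ZMod n) : PresentedGroup (geometricRels n p q s) :=
  .of ((2 * j.val + 1 : ℕ) : ZMod (2 * n))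

variable {n p q s}

theorem cyclic_relator_eq_one (j : ZMod n) :
    (.of j : PresentedGroup (cyclicRels n p q s)) ^ p * (.of j ^ (-q) * .of (j + 1) ^ q) ^ s *
      (.of j ^ (-q) * .of (j - 1) ^ q) ^ s = 1 := by
  have h := PresentedGroup.lift_of_eq_one_of_mem (rels := cyclicRels n p q s)
    (Set.mem_range_self j)
  simpa only [map_mul, map_zpow, FreeGroup.lift_apply_of] using h

theorem toGeometricGen_natCast (k : ℕ) :
    toGeometricGen n p q s k = .of ((2 * k + 1 : ℕ) : ZMod (2 * n)) := by
  rw [toGeometricGen, ZMod.val_natCast, ← ZMod.natCast_two_mul_mod_add n k 1]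

section NeZero
variable [NeZero n]

theorem geometric_relator₁_eq_one (k : ℕ) :
    (.of ((2 * k + 1 : ℕ) : ZMod (2 * n)) : PresentedGroup (geometricRels n p q s)) ^ q *
      .of ((2 * k + 2 : ℕ) : ZMod (2 * n)) ^ (-1 : ℤ) *
      .of ((2 * k + 3 : ℕ) : ZMod (2 * n)) ^ (-q) = 1 := by
  have h := PresentedGroup.lift_of_eq_one_of_mem (rels := geometricRels n p q s)
    (Set.mem_union_left _ (Set.mem_range_self ⟨k % n, Nat.mod_lt _ (NeZero.pos n)⟩))
  simpa only [map_mul, map_zpow, FreeGroup.lift_apply_of, ZMod.natCast_two_mul_mod_add] using h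

theorem geometric_relator₂_eq_one (k : ℕ) :
    (.of ((2 * k + 2 : ℕ) : ZMod (2 * n)) : PresentedGroup (geometricRels n p q s)) ^ s *
      .of ((2 * k + 3 : ℕ) : ZMod (2 * n)) ^ p *
      .of ((2 * k + 4 : ℕ) : ZMod (2 * n)) ^ (-s) = 1 := by
  have h := PresentedGroup.lift_of_eq_one_of_mem (rels := geometricRels n p q s)
    (Set.mem_union_right _ (Set.mem_range_self ⟨k % n, Nat.mod_lt _ (NeZero.pos n)⟩))
  simpa only [map_mul, map_zpow, FreeGroup.lift_apply_of, ZMod.natCast_two_mul_mod_add] using h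

theorem of_two_mul_add_two (k : ℕ) :
    (.of ((2 * k + 2 : ℕ) : ZMod (2 * n)) : PresentedGroup (geometricRels n p q s)) =
      .of ((2 * k + 3 : ℕ) : ZMod (2 * n)) ^ (-q) * .of ((2 * k + 1 : ℕ) : ZMod (2 * n)) ^ q :=
  zpow_mul_inv_mul_zpow_neg_eq_one_iff.1 (geometric_relator₁_eq_one k)

theorem toCyclicGen_two_mul_add_one (k : ℕ) :
    toCyclicGen n p q s ((2 * k + 1 : ℕ) : ZMod (2 * n)) = .of (k : ZMod n) := by
  have hval : (2 * (k % n) + 1) / 2 = k % n := by omega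
  rw [toCyclicGen, ZMod.val_natCast_two_mul_add k (by norm_num), if_pos (by omega), hval,
    ZMod.natCast_mod]

theorem toCyclicGen_two_mul_add_two (k : ℕ) :
    toCyclicGen n p q s ((2 * k + 2 : ℕ) : ZMod (2 * n)) =
      .of ((k : ZMod n) + 1) ^ (-q) * .of (k : ZMod n) ^ q := by
  have hval : (2 * ((k + 1) % n) + 0) / 2 = (k + 1) % n := by omega
  rw [show 2 * k + 2 = 2 * (k + 1) + 0 by ring, toCyclicGen,
    ZMod.val_natCast_two_mul_add (k + 1) (by norm_num), if_neg (by omega), hval, ZMod.natCast_mod,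
    Nat.cast_succ, add_sub_cancel_right]

theorem lift_toCyclicGen_eq_one :
    ∀ r ∈ geometricRels n p q s, FreeGroup.lift (toCyclicGen n p q s) r = 1 := by
  rintro r (⟨i, rfl⟩ | ⟨i, rfl⟩) <;>
    simp only [map_mul, map_zpow, FreeGroup.lift_apply_of]
  · rw [toCyclicGen_two_mul_add_one, toCyclicGen_two_mul_add_two,
      show 2 * (i : ℕ) + 3 = 2 * ((i : ℕ) + 1) + 1 by ring, toCyclicGen_two_mul_add_one,
      Nat.cast_succ]
    group
  · rw [toCyclicGen_two_mul_add_two, show 2 * (i : ℕ) + 3 = 2 * ((i : ℕ) + 1) + 1 by ring,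
      toCyclicGen_two_mul_add_one, show 2 * (i : ℕ) + 4 = 2 * ((i : ℕ) + 1) + 2 by ring,
      toCyclicGen_two_mul_add_two, Nat.cast_succ]
    apply (cyclic_relator_eq_one_iff _ _ _ p q s).1
    have h := cyclic_relator_eq_one (n := n) (p := p) (q := q) (s := s) ((i : ZMod n) + 1)
    rwa [add_sub_cancel_right] at h

theorem lift_toGeometricGen_eq_one :
    ∀ r ∈ cyclicRels n p q s, FreeGroup.lift (toGeometricGen n p q s) r = 1 := by
  rintro r ⟨j, rfl⟩
  -- so that `j - 1`, `j` and `j + 1` are casts of `k`, `k + 1` and `k + 2`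
  obtain ⟨k, rfl⟩ : ∃ k : ℕ, j = ((k + 1 : ℕ) : ZMod n) :=
    ⟨(j - 1).val, by rw [Nat.cast_succ, ZMod.natCast_zmod_val, sub_add_cancel]⟩
  simp only [map_mul, map_zpow, FreeGroup.lift_apply_of]
  rw [Nat.cast_succ, add_sub_cancel_right, ← Nat.cast_succ, ← Nat.cast_succ,
    toGeometricGen_natCast, toGeometricGen_natCast, toGeometricGen_natCast,
    show 2 * (k + 1 + 1) + 1 = 2 * (k + 1) + 3 by ring, show 2 * (k + 1) + 1 = 2 * k + 3 by ring]
  apply (cyclic_relator_eq_one_iff _ _ _ p q s).2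
  rw [← of_two_mul_add_two, show 2 * k + 3 = 2 * (k + 1) + 1 by ring, ← of_two_mul_add_two,
    show 2 * (k + 1) + 2 = 2 * k + 4 by ring, show 2 * (k + 1) + 1 = 2 * k + 3 by ring]
  exact geometric_relator₂_eq_one k

theorem toGroup_toCyclicGen (a : ZMod (2 * n)) :
    PresentedGroup.toGroup lift_toGeometricGen_eq_one (toCyclicGen n p q s a) = .of a := by
  obtain ⟨k, rfl | rfl⟩ := ZMod.exists_eq_two_mul_add_one_or_two a
  · rw [toCyclicGen_two_mul_add_one, PresentedGroup.toGroup.of, toGeometricGen_natCast]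
  · rw [toCyclicGen_two_mul_add_two, map_mul, map_zpow, map_zpow, PresentedGroup.toGroup.of,
      PresentedGroup.toGroup.of, ← Nat.cast_succ, toGeometricGen_natCast, toGeometricGen_natCast,
      of_two_mul_add_two, show 2 * (k + 1) + 1 = 2 * k + 3 by ring]

theorem toGroup_toGeometricGen (j : ZMod n) :
    PresentedGroup.toGroup lift_toCyclicGen_eq_one (toGeometricGen n p q s j) = .of j := by
  rw [toGeometricGen, PresentedGroup.toGroup.of, toCyclicGen_two_mul_add_one,
    ZMod.natCast_zmod_val]

variable (n p q s) in
def mulEquiv : PresentedGroup (geometricRels n p q s) ≃* PresentedGroup (cyclicRels n p q s) :=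
  PresentedGroup.mulEquivOfGenerators lift_toCyclicGen_eq_one lift_toGeometricGen_eq_one
    toGroup_toCyclicGen toGroup_toGeometricGen

end NeZero

end PeriodicTakahashi

/-- The geometric presentation of π₁(Mₙ(p/q, 1/s)) with 2n generators is isomorphic to
the cyclic presentation (1) with n generators. -/
theorem stmt_4 (n : ℕ) (hn : 1 ≤ n) (p q s : ℤ) :
    let c : ℕ → ZMod (2 * n) := Nat.cast
    let rels1 : Set (FreeGroup (ZMod (2 * n))) :=
      (Set.range fun i : Fin n =>
        (FreeGroup.of (c (2 * (i : ℕ) + 1))) ^ q * (FreeGroup.of (c (2 * (i : ℕ) + 2))) ^ (-1 : ℤ) *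
          (FreeGroup.of (c (2 * (i : ℕ) + 3))) ^ (-q)) ∪
      (Set.range fun i : Fin n =>
        (FreeGroup.of (c (2 * (i : ℕ) + 2))) ^ s * (FreeGroup.of (c (2 * (i : ℕ) + 3))) ^ p *
          (FreeGroup.of (c (2 * (i : ℕ) + 4))) ^ (-s))
    let rels2 : Set (FreeGroup (ZMod n)) :=
      Set.range fun i : ZMod n =>
        (FreeGroup.of i) ^ p * ((FreeGroup.of i) ^ (-q) * (FreeGroup.of (i + 1)) ^ q) ^ s *
          ((FreeGroup.of i) ^ (-q) * (FreeGroup.of (i - 1)) ^ q) ^ s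
    Nonempty (PresentedGroup rels1 ≃* PresentedGroup rels2) := by
  have : NeZero n := ⟨by omega⟩
  exact ⟨PeriodicTakahashi.mulEquiv n p q s⟩
end

section
/- Let q, s be integers with 4sq ≠ 1. The abelianization of the group presented by generators z_1, z_2 and relators z_1 (z_1^{-q} z_2^q)^{2s} and z_2 (z_2^{-q} z_1^q)^{2s} is a finite abelian group of order |1 - 4sq|. -/
/-!
In the abelianization the relators read `z₀ + 2s(q z₁ - q z₀)` and `z₁ + 2s(q z₀ - q z₁)`; their
sum gives `z₁ = -z₀`, after which the first one says `(1 - 4sq) z₀ = 0`. Hence the abelianization is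
cyclic, generated by `z₀`, of order dividing `|1 - 4sq|`, and the map `z₀ ↦ 1, z₁ ↦ -1` onto
`ℤ/|1 - 4sq|` shows that the order is exactly `|1 - 4sq|`, which is nonzero as `1 - 4sq ≡ 1 mod 4`.
-/

open Subgroup

theorem eq_inv_and_zpow_eq_one_of_relators {G : Type*} [CommGroup G] {a b : G} (q s : ℤ)
    (ha : a * (a ^ (-q) * b ^ q) ^ (2 * s) = 1) (hb : b * (b ^ (-q) * a ^ q) ^ (2 * s) = 1) :
    b = a⁻¹ ∧ a ^ (1 - 4 * s * q) = 1 := by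
  set x := Additive.ofMul a
  set y := Additive.ofMul b
  have hx : x + (2 * s) • ((-q) • x + q • y) = 0 := congrArg Additive.ofMul ha
  have hy : y + (2 * s) • ((-q) • y + q • x) = 0 := congrArg Additive.ofMul hb
  have hyx : y = -x := by linear_combination (norm := module) hx + hy
  have hpow : (1 - 4 * s * q) • x = 0 := by
    rw [hyx] at hx
    linear_combination (norm := module) hx
  exact ⟨congrArg Additive.toMul hyx, congrArg Additive.toMul hpow⟩

namespace Takahashi

variable (q s : ℤ)

def rels : Set (FreeGroup (Fin 2)) :=
  { .of 0 * (.of 0 ^ (-q) * .of 1 ^ q) ^ (2 * s), .of 1 * (.of 1 ^ (-q) * .of 0 ^ q) ^ (2 * s) }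

abbrev H₁ : Type := Abelianization (PresentedGroup (rels q s))

variable {q s}

def gen (i : Fin 2) : H₁ q s := Abelianization.of (PresentedGroup.of i)

theorem gen_one_eq_inv_and_gen_zero_zpow_eq_one :
    gen 1 = (gen 0 : H₁ q s)⁻¹ ∧ (gen 0 : H₁ q s) ^ (1 - 4 * s * q) = 1 := by
  have hrel : ∀ r ∈ rels q s, Abelianization.of (PresentedGroup.mk (rels q s) r) = 1 :=
    fun r hr ↦ by rw [PresentedGroup.one_of_mem hr, map_one]
  refine eq_inv_and_zpow_eq_one_of_relators q s ?_ ?_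
  · simpa only [map_mul, map_zpow, gen, PresentedGroup.of] using hrel _ (Set.mem_insert _ _)
  · simpa only [map_mul, map_zpow, gen, PresentedGroup.of] using hrel _ (Set.mem_insert_of_mem _ rfl)

theorem mem_zpowers_gen_zero (x : H₁ q s) : x ∈ zpowers (gen 0) := by
  refine QuotientGroup.induction_on x fun x ↦
    PresentedGroup.generated_by _ ((zpowers (gen 0)).comap Abelianization.of) (fun i ↦ ?_) x
  fin_cases i
  · exact mem_zpowers _
  · change gen 1 ∈ zpowers (gen 0)
    rw [gen_one_eq_inv_and_gen_zero_zpow_eq_one.1]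
    exact inv_mem (mem_zpowers _)

theorem lift_rels_eq_one :
    ∀ r ∈ rels q s, FreeGroup.lift
      ![Multiplicative.ofAdd (1 : ZMod (1 - 4 * s * q).natAbs), Multiplicative.ofAdd (-1)] r = 1 := by
  have key : ((1 - 4 * s * q : ℤ) : ZMod (1 - 4 * s * q).natAbs) = 0 :=
    (ZMod.intCast_zmod_eq_zero_iff_dvd _ _).mpr (Int.natAbs_dvd.mpr dvd_rfl)
  push_cast at key
  rintro r (rfl | rfl)
  all_goals
    simp only [map_mul, map_zpow, FreeGroup.lift_apply_of, Matrix.cons_val_zero,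
      Matrix.cons_val_one, ← ofAdd_zsmul, ← ofAdd_add, ← ofAdd_zero]
    congr 1
    simp only [zsmul_eq_mul]
    push_cast
  · linear_combination key
  · linear_combination -key

def toZMod : H₁ q s →* Multiplicative (ZMod (1 - 4 * s * q).natAbs) :=
  Abelianization.lift (PresentedGroup.toGroup lift_rels_eq_one)

theorem toZMod_gen_zero : toZMod (gen 0 : H₁ q s) = Multiplicative.ofAdd 1 := by
  simp [toZMod, gen, PresentedGroup.toGroup.of]

theorem orderOf_gen_zero : orderOf (gen 0 : H₁ q s) = (1 - 4 * s * q).natAbs := by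
  refine Nat.dvd_antisymm ?_ ?_
  · exact Int.natCast_dvd.mp
      (orderOf_dvd_iff_zpow_eq_one.mpr gen_one_eq_inv_and_gen_zero_zpow_eq_one.2)
  · simpa [toZMod_gen_zero, orderOf_ofAdd_eq_addOrderOf, ZMod.addOrderOf_one]
      using orderOf_map_dvd toZMod (gen 0 : H₁ q s)

end Takahashi

theorem stmt_7_general (q s : ℤ) :
    let z : Fin 2 → FreeGroup (Fin 2) := FreeGroup.of
    let rels : Set (FreeGroup (Fin 2)) :=
      { z 0 * ((z 0) ^ (-q) * (z 1) ^ q) ^ (2 * s),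
        z 1 * ((z 1) ^ (-q) * (z 0) ^ q) ^ (2 * s) }
    Finite (Abelianization (PresentedGroup rels)) ∧
      Nat.card (Abelianization (PresentedGroup rels)) = (1 - 4 * s * q).natAbs := by
  intro z rels
  have hcard : Nat.card (Takahashi.H₁ q s) = (1 - 4 * s * q).natAbs := by
    rw [← Takahashi.orderOf_gen_zero,
      orderOf_eq_card_of_forall_mem_zpowers Takahashi.mem_zpowers_gen_zero]
  have hne : 1 - 4 * s * q ≠ 0 := by
    rw [show 1 - 4 * s * q = 1 - 4 * (s * q) by ring]
    omega
  exact ⟨Nat.finite_of_card_ne_zero (hcard.trans_ne (Int.natAbs_ne_zero.mpr hne)), hcard⟩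

/-- H₁ of M₂(1/q, 1/s): the abelianization of the cyclic presentation with n = 2, p = 1
is finite of order |1 - 4sq|. -/
theorem stmt_7 (q s : ℤ) (h : 4 * s * q ≠ 1) :
    let z : Fin 2 → FreeGroup (Fin 2) := FreeGroup.of
    let rels : Set (FreeGroup (Fin 2)) :=
      { z 0 * ((z 0) ^ (-q) * (z 1) ^ q) ^ (2 * s),
        z 1 * ((z 1) ^ (-q) * (z 0) ^ q) ^ (2 * s) }
    Finite (Abelianization (PresentedGroup rels)) ∧
      Nat.card (Abelianization (PresentedGroup rels)) = (1 - 4 * s * q).natAbs :=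
  stmt_7_general q s
end

section
/- The abelianization of the group presented by six generators x_1, ..., x_6 and six relators x_{2i-1} x_{2i}^3 x_{2i+1}^{-1} and x_{2i} x_{2i+1}^3 x_{2i+2}^{-1} for i = 1, 2, 3 (subscripts mod 6) is a finite group of order 1296. -/
/-!
In the abelianization the relators say `x (k + 2) = x k + 3 • x (k + 1)`, so additive maps out of
it are exactly the `6`-periodic solutions of this recurrence, and such a solution is determined by
its values at `0` and `1`. The solution starting from `(1, 0), (0, 1)` is `6`-periodic modulo
`36`, and the relators force `36 • x 0 = 36 • x 1 = 0`; together these identify the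
abelianization with `(ℤ/36)²`.
-/

theorem ZMod.addMonoidHom_prod_ext {A : Type*} [AddCommGroup A] {m m' : ℕ}
    {f g : ZMod m × ZMod m' →+ A} (h₁ : f (1, 0) = g (1, 0)) (h₂ : f (0, 1) = g (0, 1)) :
    f = g := by
  ext ⟨a, b⟩
  obtain ⟨a, rfl⟩ := ZMod.intCast_surjective a
  obtain ⟨b, rfl⟩ := ZMod.intCast_surjective b
  have hab : ((a : ZMod m), (b : ZMod m')) = a • ((1 : ZMod m), (0 : ZMod m')) + b • (0, 1) := by
    simp
  rw [hab, map_add, map_add, map_zsmul, map_zsmul, map_zsmul, map_zsmul, h₁, h₂]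

namespace RecurrencePresentation

variable {n : ℕ} {p : ℤ} {A B : Type*} [AddCommGroup A] [AddCommGroup B]

def IsRecurrent (p : ℤ) (u : ZMod n → A) : Prop :=
  ∀ k, u (k + 2) = u k + p • u (k + 1)

theorem IsRecurrent.ext {u v : ZMod n → A} (hu : IsRecurrent p u)
    (hv : IsRecurrent p v) (h0 : u 0 = v 0) (h1 : u 1 = v 1) : u = v := by
  let agree (k : ZMod n) : Prop := u k = v k ∧ u (k + 1) = v (k + 1)
  have step (k : ZMod n) : agree k ↔ agree (k + 1) := by
    simp only [agree, add_assoc, one_add_one_eq_two, hu k, hv k]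
    constructor
    · rintro ⟨hk, hk1⟩
      exact ⟨hk1, by rw [hk, hk1]⟩
    · rintro ⟨hk1, hk2⟩
      exact ⟨by simpa [hk1] using hk2, hk1⟩
  have agree_intCast (m : ℤ) : agree m := by
    induction m using Int.induction_on with
    | zero => simpa [agree] using ⟨h0, h1⟩
    | succ m ih => rw [Int.cast_add, Int.cast_one]; exact (step _).1 ih
    | pred m ih => rw [Int.cast_sub, Int.cast_one]; exact (step _).2 (by rwa [sub_add_cancel])
  funext k
  obtain ⟨m, rfl⟩ := ZMod.intCast_surjective k
  exact (agree_intCast m).1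

theorem IsRecurrent.comp {u : ZMod n → A} (hu : IsRecurrent p u) (f : A →+ B) :
    IsRecurrent p (f ∘ u) := fun k => by
  simp only [Function.comp_apply, hu k, map_add, map_zsmul]

def relators (n : ℕ) (p : ℤ) : Set (FreeGroup (ZMod n)) :=
  Set.range fun k : ZMod n =>
    FreeGroup.of k * FreeGroup.of (k + 1) ^ p * (FreeGroup.of (k + 2))⁻¹

abbrev H1 (n : ℕ) (p : ℤ) : Type :=
  Additive (Abelianization (PresentedGroup (relators n p)))

def gen (k : ZMod n) : H1 n p :=
  .ofMul (Abelianization.of (PresentedGroup.of k))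

theorem isRecurrent_gen : IsRecurrent p (gen (n := n) (p := p)) := fun k => by
  have hrel : (PresentedGroup.of k * PresentedGroup.of (k + 1) ^ p *
      (PresentedGroup.of (k + 2))⁻¹ : PresentedGroup (relators n p)) = 1 :=
    (QuotientGroup.eq_one_iff _).2 (Subgroup.subset_normalClosure ⟨k, rfl⟩)
  have hab := congrArg Abelianization.of (mul_inv_eq_one.1 hrel)
  simp only [map_mul, map_zpow] at hab
  simp only [gen, ← hab, ofMul_mul, ofMul_zpow]

def lift (u : ZMod n → A) (hu : IsRecurrent p u) : H1 n p →+ A :=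
  MonoidHom.toAdditiveLeft <| Abelianization.lift <| PresentedGroup.toGroup
    (f := fun k => Multiplicative.ofAdd (u k)) <| by
      rintro _ ⟨k, rfl⟩
      simp [hu k]

@[simp]
theorem lift_gen (u : ZMod n → A) (hu : IsRecurrent p u) (k : ZMod n) :
    lift u hu (gen k) = u k := by
  simp [lift, gen]

theorem hom_ext {f g : H1 n p →+ A} (h0 : f (gen 0) = g (gen 0)) (h1 : f (gen 1) = g (gen 1)) :
    f = g := by
  have hgen := (isRecurrent_gen.comp f).ext (isRecurrent_gen.comp g) h0 h1
  refine AddMonoidHom.toMultiplicativeRight.injective <| Abelianization.hom_ext _ _ <|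
    PresentedGroup.ext fun k => ?_
  exact congrArg Multiplicative.ofAdd (congrFun hgen k)

theorem thirtySix_smul_gen : (36 : ℤ) • (gen 0 : H1 6 3) = 0 ∧ (36 : ℤ) • (gen 1 : H1 6 3) = 0 := by
  have r := isRecurrent_gen (n := 6) (p := 3)
  have r0 : (gen 2 : H1 6 3) = gen 0 + (3 : ℤ) • gen 1 := r 0
  have r1 : (gen 3 : H1 6 3) = gen 1 + (3 : ℤ) • gen 2 := r 1
  have r2 : (gen 4 : H1 6 3) = gen 2 + (3 : ℤ) • gen 3 := r 2
  have r3 : (gen 5 : H1 6 3) = gen 3 + (3 : ℤ) • gen 4 := r 3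
  have r4 : (gen 0 : H1 6 3) = gen 4 + (3 : ℤ) • gen 5 := r 4
  have r5 : (gen 1 : H1 6 3) = gen 5 + (3 : ℤ) • gen 0 := r 5
  -- The coefficients solve the integer linear system writing `36 • gen 0`, resp. `36 • gen 1`,
  -- as a combination of the six relations.
  constructor
  · linear_combination (norm := module) (-3 : ℤ) • r0 - r1 - r3 + (3 : ℤ) • r4 - (10 : ℤ) • r5
  · linear_combination (norm := module) (-10 : ℤ) • r0 - (3 : ℤ) • r1 - r2 - r4 + (3 : ℤ) • r5

-- The coordinates of `gen k` in terms of `gen 0, gen 1`, read modulo `36`.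
def coords : ZMod 6 → ZMod 36 × ZMod 36 :=
  ![(1, 0), (0, 1), (1, 3), (3, 10), (10, 33), (33, 1)]

theorem isRecurrent_coords : IsRecurrent 3 coords := by
  unfold IsRecurrent
  decide

def toZMod36 : H1 6 3 →+ ZMod 36 × ZMod 36 := lift coords isRecurrent_coords

def ofZMod36 : ZMod 36 × ZMod 36 →+ H1 6 3 :=
  (ZMod.lift 36 ⟨zmultiplesHom _ (gen 0), thirtySix_smul_gen.1⟩).coprod
    (ZMod.lift 36 ⟨zmultiplesHom _ (gen 1), thirtySix_smul_gen.2⟩)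

@[simp]
theorem toZMod36_gen (k : ZMod 6) : toZMod36 (gen k) = coords k :=
  lift_gen _ _ k

theorem ofZMod36_intCast (a b : ℤ) :
    ofZMod36 ((a : ZMod 36), (b : ZMod 36)) = a • gen 0 + b • gen 1 := by
  simp [ofZMod36]

@[simp]
theorem ofZMod36_one_zero : ofZMod36 (1, 0) = gen 0 := by
  simpa using ofZMod36_intCast 1 0

@[simp]
theorem ofZMod36_zero_one : ofZMod36 (0, 1) = gen 1 := by
  simpa using ofZMod36_intCast 0 1

def equivZMod36 : H1 6 3 ≃+ ZMod 36 × ZMod 36 :=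
  toZMod36.toAddEquiv ofZMod36
    (hom_ext (by simp [coords]) (by simp [coords]))
    (ZMod.addMonoidHom_prod_ext (by simp [coords]) (by simp [coords]))

theorem card_H1_six_three : Nat.card (H1 6 3) = 1296 := by
  rw [Nat.card_congr equivZMod36.toEquiv, Nat.card_prod, Nat.card_zmod]

end RecurrencePresentation

/-- |H₁(M₃(3,-3))| = 1296: the abelianization of the geometric presentation with
n = 3, p = 3, q = 1, r = -3, s = 1 is finite of order 1296. -/
theorem stmt_8 :
    let c : ℕ → ZMod 6 := Nat.cast
    let x : ZMod 6 → FreeGroup (ZMod 6) := FreeGroup.of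
    let rels : Set (FreeGroup (ZMod 6)) :=
      (Set.range fun i : Fin 3 =>
        x (c (2 * (i : ℕ) + 1)) * (x (c (2 * (i : ℕ) + 2))) ^ (3 : ℤ) *
          (x (c (2 * (i : ℕ) + 3)))⁻¹) ∪
      (Set.range fun i : Fin 3 =>
        x (c (2 * (i : ℕ) + 2)) * (x (c (2 * (i : ℕ) + 3))) ^ (3 : ℤ) *
          (x (c (2 * (i : ℕ) + 4)))⁻¹)
    Finite (Abelianization (PresentedGroup rels)) ∧
      Nat.card (Abelianization (PresentedGroup rels)) = 1296 := by
  intro c x rels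
  have hrels : rels = RecurrencePresentation.relators 6 3 := by
    apply Set.Subset.antisymm
    · refine Set.union_subset (Set.range_subset_iff.2 fun i => ?_)
        (Set.range_subset_iff.2 fun i => ?_) <;> fin_cases i
      exacts [⟨1, rfl⟩, ⟨3, rfl⟩, ⟨5, rfl⟩, ⟨2, rfl⟩, ⟨4, rfl⟩, ⟨0, rfl⟩]
    · refine Set.range_subset_iff.2 fun k => ?_
      fin_cases k
      exacts [Or.inr ⟨2, rfl⟩, Or.inl ⟨0, rfl⟩, Or.inr ⟨0, rfl⟩, Or.inl ⟨1, rfl⟩,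
        Or.inr ⟨1, rfl⟩, Or.inl ⟨2, rfl⟩]
  have hcard : Nat.card (Abelianization (PresentedGroup rels)) = 1296 := by
    rw [hrels]
    exact RecurrencePresentation.card_H1_six_three
  exact ⟨Nat.finite_of_card_ne_zero (by rw [hcard]; norm_num), hcard⟩
end

section
/- The abelianization of the group presented by eight generators x_1, ..., x_8 and eight relators x_{2i-1}^2 x_{2i}^{-1} x_{2i+1}^{-2} and x_{2i} x_{2i+1}^3 x_{2i+2}^{-1} for i = 1, 2, 3, 4 (subscripts mod 8) is a finite group of order 15. -/
/-!
Abelianizing, the eight relators become integer linear relations among the classes of the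
generators. An explicit unimodular elimination expresses every class as a multiple of the class
of `x₇` and shows that `15` kills it, so the abelianization is cyclic, generated by `x₇`, of
order dividing `15`. Conversely `xⱼ ↦ wⱼ` with `w = (9, 4, 6, 1, 9, 4, 6, 1)` kills every
relator and defines a homomorphism onto `ZMod 15` sending `x₇` to `1`, so the order is exactly `15`.
-/

def takahashiRels : Set (FreeGroup (ZMod 8)) :=
  (Set.range fun i : Fin 4 =>
    (FreeGroup.of ((2 * (i : ℕ) + 1 : ℕ) : ZMod 8)) ^ (2 : ℤ) *
      (FreeGroup.of ((2 * (i : ℕ) + 2 : ℕ) : ZMod 8))⁻¹ *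
      (FreeGroup.of ((2 * (i : ℕ) + 3 : ℕ) : ZMod 8)) ^ (-2 : ℤ)) ∪
  (Set.range fun i : Fin 4 =>
    FreeGroup.of ((2 * (i : ℕ) + 2 : ℕ) : ZMod 8) *
      (FreeGroup.of ((2 * (i : ℕ) + 3 : ℕ) : ZMod 8)) ^ (3 : ℤ) *
      (FreeGroup.of ((2 * (i : ℕ) + 4 : ℕ) : ZMod 8))⁻¹)

def takahashiWeight : ZMod 8 → ℤ := ![9, 4, 6, 1, 9, 4, 6, 1]

theorem eq_takahashiWeight_smul {M : Type*} [AddCommGroup M] (u : ZMod 8 → M)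
    (h₁ : ∀ i : Fin 4, (2 : ℤ) • u (2 * (i : ℕ) + 1 : ℕ) - u (2 * (i : ℕ) + 2 : ℕ) -
      (2 : ℤ) • u (2 * (i : ℕ) + 3 : ℕ) = 0)
    (h₂ : ∀ i : Fin 4, u (2 * (i : ℕ) + 2 : ℕ) + (3 : ℤ) • u (2 * (i : ℕ) + 3 : ℕ) -
      u (2 * (i : ℕ) + 4 : ℕ) = 0) :
    (15 : ℤ) • u 7 = 0 ∧ ∀ j, u j = takahashiWeight j • u 7 := by
  have h8 : (8 : ZMod 8) = 0 := rfl
  have h9 : (9 : ZMod 8) = 1 := rfl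
  have h10 : (10 : ZMod 8) = 2 := rfl
  norm_num [Fin.forall_fin_succ] at h₁ h₂
  simp only [h8, h9, h10] at h₁ h₂
  obtain ⟨a₁, a₃, a₅, a₇⟩ := h₁
  obtain ⟨b₂, b₄, b₆, b₀⟩ := h₂
  refine ⟨?_, fun j => ?_⟩
  -- The coefficients are read off a unimodular reduction of the relation matrix to
  -- `diag(1, …, 1, 15)`.
  · linear_combination (norm := module) (6 : ℤ) • a₁ - (6 : ℤ) • a₃ - (9 : ℤ) • a₅ + (9 : ℤ) • a₇ +
      (8 : ℤ) • b₂ + (2 : ℤ) • b₄ - (7 : ℤ) • b₆ + (2 : ℤ) • b₀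
  have e₀ : u 0 = (9 : ℤ) • u 7 := by
    linear_combination (norm := module) (-4 : ℤ) • a₁ + (2 : ℤ) • a₃ + (5 : ℤ) • a₅ - (4 : ℤ) • a₇ -
      (4 : ℤ) • b₂ - (2 : ℤ) • b₄ + (3 : ℤ) • b₆
  have e₁ : u 1 = (4 : ℤ) • u 7 := by
    linear_combination (norm := module) -a₁ + (2 : ℤ) • a₃ + (2 : ℤ) • a₅ - (3 : ℤ) • a₇ -
      (2 : ℤ) • b₂ + (2 : ℤ) • b₆ - b₀
  have e₂ : u 2 = (6 : ℤ) • u 7 := by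
    linear_combination (norm := module) -a₁ + (2 : ℤ) • a₃ + (2 : ℤ) • a₅ - (4 : ℤ) • a₇ -
      (2 : ℤ) • b₂ + (2 : ℤ) • b₆ - (2 : ℤ) • b₀
  have e₃ : u 3 = (1 : ℤ) • u 7 := by
    linear_combination (norm := module) -a₁ + a₃ + a₅ - a₇ - b₂ + b₆
  have e₄ : u 4 = (9 : ℤ) • u 7 := by
    linear_combination (norm := module) (-4 : ℤ) • a₁ + (5 : ℤ) • a₃ + (5 : ℤ) • a₅ - (7 : ℤ) • a₇ -
      (6 : ℤ) • b₂ + (5 : ℤ) • b₆ - (2 : ℤ) • b₀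
  have e₅ : u 5 = (4 : ℤ) • u 7 := by
    linear_combination (norm := module) (-2 : ℤ) • a₁ + a₃ + (3 : ℤ) • a₅ - (2 : ℤ) • a₇ -
      (2 : ℤ) • b₂ - b₄ + (2 : ℤ) • b₆
  have e₆ : u 6 = (6 : ℤ) • u 7 := by
    linear_combination (norm := module) (-4 : ℤ) • a₁ + (2 : ℤ) • a₃ + (5 : ℤ) • a₅ - (4 : ℤ) • a₇ -
      (4 : ℤ) • b₂ - (2 : ℤ) • b₄ + (4 : ℤ) • b₆
  fin_cases j
  exacts [e₀, e₁, e₂, e₃, e₄, e₅, e₆, (one_smul ℤ _).symm]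

theorem lift_takahashiWeight_eq_one : ∀ r ∈ takahashiRels,
    FreeGroup.lift (fun j => Multiplicative.ofAdd (takahashiWeight j : ZMod 15)) r = 1 := by
  rintro r (⟨i, rfl⟩ | ⟨i, rfl⟩) <;> fin_cases i <;> decide

theorem eq_zpow_takahashiWeight {G : Type*} [CommGroup G] (f : ZMod 8 → G)
    (hf : ∀ r ∈ takahashiRels, FreeGroup.lift f r = 1) :
    f 7 ^ 15 = 1 ∧ ∀ j, f j = f 7 ^ takahashiWeight j := by
  have h₁ (i : Fin 4) := congrArg Additive.ofMul (hf _ (Or.inl ⟨i, rfl⟩))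
  have h₂ (i : Fin 4) := congrArg Additive.ofMul (hf _ (Or.inr ⟨i, rfl⟩))
  simp only [map_mul, map_zpow, map_inv, FreeGroup.lift_apply_of, ofMul_mul, ofMul_zpow,
    ofMul_inv, ofMul_one] at h₁ h₂
  obtain ⟨h15, hw⟩ := eq_takahashiWeight_smul (fun j => Additive.ofMul (f j))
    (fun i => by linear_combination (norm := module) h₁ i)
    (fun i => by linear_combination (norm := module) h₂ i)
  refine ⟨?_, fun j => ?_⟩
  · simpa only [toMul_zsmul, toMul_ofMul, toMul_zero, zpow_ofNat] using congrArg Additive.toMul h15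
  · simpa only [toMul_zsmul, toMul_ofMul] using congrArg Additive.toMul (hw j)

theorem PresentedGroup.lift_comp_of_eq_one {α G : Type*} [Group G] {rels : Set (FreeGroup α)}
    (φ : PresentedGroup rels →* G) {r : FreeGroup α} (hr : r ∈ rels) :
    FreeGroup.lift (fun a => φ (PresentedGroup.of a)) r = 1 := by
  have : FreeGroup.lift (fun a => φ (PresentedGroup.of a)) = φ.comp (PresentedGroup.mk rels) :=
    FreeGroup.ext_hom _ _ fun _ => by simp [PresentedGroup.of]
  rw [this, MonoidHom.comp_apply, PresentedGroup.one_of_mem hr, map_one]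

theorem PresentedGroup.abelianization_generated_by {α : Type*} {rels : Set (FreeGroup α)}
    (H : Subgroup (Abelianization (PresentedGroup rels)))
    (h : ∀ a, Abelianization.of (PresentedGroup.of a) ∈ H)
    (x : Abelianization (PresentedGroup rels)) : x ∈ H := by
  induction x using QuotientGroup.induction_on with
  | H y => exact PresentedGroup.generated_by rels (H.comap Abelianization.of) h y

/-- |H₁(M₄(3/2,1))| = 15: the abelianization of the geometric presentation with
n = 4, p = 3, q = 2, r = 1, s = 1 is finite of order 15. -/
theorem stmt_9 :
    let c : ℕ → ZMod 8 := Nat.cast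
    let x : ZMod 8 → FreeGroup (ZMod 8) := FreeGroup.of
    let rels : Set (FreeGroup (ZMod 8)) :=
      (Set.range fun i : Fin 4 =>
        (x (c (2 * (i : ℕ) + 1))) ^ (2 : ℤ) * (x (c (2 * (i : ℕ) + 2)))⁻¹ *
          (x (c (2 * (i : ℕ) + 3))) ^ (-2 : ℤ)) ∪
      (Set.range fun i : Fin 4 =>
        x (c (2 * (i : ℕ) + 2)) * (x (c (2 * (i : ℕ) + 3))) ^ (3 : ℤ) *
          (x (c (2 * (i : ℕ) + 4)))⁻¹)
    Finite (Abelianization (PresentedGroup rels)) ∧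
      Nat.card (Abelianization (PresentedGroup rels)) = 15 := by
  intro c x rels
  change Finite (Abelianization (PresentedGroup takahashiRels)) ∧ Nat.card _ = 15
  let g : Abelianization (PresentedGroup takahashiRels) := .of (.of 7)
  obtain ⟨hg15, hgen⟩ := eq_zpow_takahashiWeight _ fun _ =>
    PresentedGroup.lift_comp_of_eq_one Abelianization.of
  have hcyclic : ∀ a, a ∈ Subgroup.zpowers g :=
    PresentedGroup.abelianization_generated_by _ fun j => ⟨takahashiWeight j, (hgen j).symm⟩
  have horder : orderOf g = 15 := by
    refine Nat.dvd_antisymm (orderOf_dvd_of_pow_eq_one hg15) ?_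
    have := orderOf_map_dvd
      (Abelianization.lift (PresentedGroup.toGroup lift_takahashiWeight_eq_one)) g
    simpa [g, orderOf_ofAdd_eq_addOrderOf, takahashiWeight] using this
  have hcard : Nat.card _ = 15 := (orderOf_eq_card_of_forall_mem_zpowers hcyclic).symm.trans horder
  exact ⟨Nat.finite_of_card_ne_zero (by rw [hcard]; norm_num), hcard⟩
end

section
/- Let n ≥ 1. The abelianization of the group presented by generators z_1, ..., z_n and relators z_{i-1} z_{i+1} z_i^{-1} for i = 1, ..., n (subscripts mod n) is isomorphic to the cokernel of the circulant matrix with first row (-1, 1, 0, ..., 0, 1), and its order, when finite, equals |∏_{k=0}^{n-1} (ω^k + ω^{-k} - 1)| where ω = exp(2πi/n); in particular, this product equals |Res(t^2 - t + 1, t^n - 1)|. -/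
/-!
Abelianizing a presentation replaces every relator by its vector of exponent sums, so the
abelianization of the Sieradski group is `ℤ^(ZMod n)` modulo the span of the columns of the
circulant relation matrix `M`. When this cokernel is finite, `M` is nonsingular and the cokernel
has order `|det M|` (Smith normal form). The discrete Fourier transform on `ZMod n`
diagonalizes every circulant matrix; the eigenvalue of `M` at the frequency `k` is
`ωᵏ + ω⁻ᵏ - 1`, whence `det M = ∏ₖ (ωᵏ + ω⁻ᵏ - 1)`. Multiplying each factor by the unit `ωᵏ`
gives `(ωᵏ)² - ωᵏ + 1`, the value of `t² - t + 1` at the `n`-th roots of unity, so the product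
has the absolute value of `Res(t² - t + 1, tⁿ - 1)`.
-/

open Submodule

namespace FreeGroup

variable {α : Type*} [DecidableEq α]

def exponents : FreeGroup α →* Multiplicative (α → ℤ) :=
  FreeGroup.lift fun a => .ofAdd (Pi.single a 1)

@[simp]
theorem exponents_of (a : α) : exponents (of a) = .ofAdd (Pi.single a 1) :=
  lift_apply_of

end FreeGroup

namespace PresentedGroup

open FreeGroup

variable {α : Type*} [DecidableEq α] (rels : Set (FreeGroup α))

def relationModule : Submodule ℤ (α → ℤ) :=
  span ℤ ((fun w => (exponents w).toAdd) '' rels)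

noncomputable def abelianizationToQuotient :
    Additive (Abelianization (PresentedGroup rels)) →+ (α → ℤ) ⧸ relationModule rels :=
  MonoidHom.toAdditiveLeft <| Abelianization.lift <|
    QuotientGroup.lift _ ((relationModule rels).mkQ.toAddMonoidHom.toMultiplicative.comp exponents)
      (Subgroup.normalClosure_le_normal fun w hw =>
        (Submodule.Quotient.mk_eq_zero _).2 (subset_span ⟨w, hw, rfl⟩))

theorem abelianizationToQuotient_ofMul_of_mk (w : FreeGroup α) :
    abelianizationToQuotient rels (.ofMul (.of (mk rels w))) =
      Submodule.Quotient.mk (exponents w).toAdd :=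
  rfl

variable [Finite α]

noncomputable def generatorsToAbelianization :
    (α → ℤ) →ₗ[ℤ] Additive (Abelianization (PresentedGroup rels)) :=
  (Pi.basisFun ℤ α).constr ℤ fun a => .ofMul (.of (of a))

theorem generatorsToAbelianization_single (a : α) :
    generatorsToAbelianization rels (Pi.single a 1) = .ofMul (.of (of a)) := by
  rw [← Pi.basisFun_apply ℤ, generatorsToAbelianization, Module.Basis.constr_basis]

theorem generatorsToAbelianization_exponents (w : FreeGroup α) :
    generatorsToAbelianization rels (exponents w).toAdd = .ofMul (.of (mk rels w)) := by
  induction w using FreeGroup.induction_on with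
  | C1 => simp
  | of a => rw [exponents_of]; exact generatorsToAbelianization_single rels a
  | inv_of a h => simp only [_root_.map_inv, toAdd_inv, map_neg, h, ofMul_inv]
  | mul x y hx hy => simp only [_root_.map_mul, toAdd_mul, map_add, hx, hy, ofMul_mul]

noncomputable def quotientToAbelianization :
    (α → ℤ) ⧸ relationModule rels →ₗ[ℤ] Additive (Abelianization (PresentedGroup rels)) :=
  (relationModule rels).liftQ (generatorsToAbelianization rels) <| span_le.2 <| by
    rintro _ ⟨w, hw, rfl⟩
    simp [generatorsToAbelianization_exponents, one_of_mem hw]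

theorem quotientToAbelianization_mk (x : α → ℤ) :
    quotientToAbelianization rels (Submodule.Quotient.mk x) = generatorsToAbelianization rels x :=
  liftQ_apply ..

noncomputable def abelianizationEquivQuotient :
    Additive (Abelianization (PresentedGroup rels)) ≃+ (α → ℤ) ⧸ relationModule rels where
  toFun := abelianizationToQuotient rels
  invFun := quotientToAbelianization rels
  left_inv x := by
    obtain ⟨g, rfl⟩ := QuotientGroup.mk_surjective x.toMul
    obtain ⟨w, rfl⟩ := mk_surjective rels g
    change quotientToAbelianization rels
      (abelianizationToQuotient rels (.ofMul (.of (mk rels w)))) = .ofMul (.of (mk rels w))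
    rw [abelianizationToQuotient_ofMul_of_mk, quotientToAbelianization_mk,
      generatorsToAbelianization_exponents]
  right_inv x := by
    suffices (abelianizationToQuotient rels).toIntLinearMap ∘ₗ quotientToAbelianization rels =
        LinearMap.id from LinearMap.congr_fun this x
    refine linearMap_qext _ <| (Pi.basisFun ℤ α).ext fun a => ?_
    simp only [LinearMap.comp_apply, mkQ_apply, quotientToAbelianization_mk, Pi.basisFun_apply,
      generatorsToAbelianization_single]
    exact (abelianizationToQuotient_ofMul_of_mk rels (.of a)).trans (by rw [exponents_of]; rfl)
  map_add' := map_add _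

end PresentedGroup

namespace Matrix

variable {ι : Type*} [Fintype ι] [DecidableEq ι] (A : Matrix ι ι ℤ)

theorem det_ne_zero_of_finite_quotient_range [Finite ((ι → ℤ) ⧸ LinearMap.range A.mulVecLin)] :
    A.det ≠ 0 := by
  -- a left null vector `v` of `A` kills the range, which contains `(#coker A) • Pi.single i 1`
  intro hdet
  obtain ⟨v, hv, hvA⟩ := exists_vecMul_eq_zero_iff.2 hdet
  obtain ⟨i, hi⟩ := Function.ne_iff.1 hv
  have hm := Nat.card_pos (α := (ι → ℤ) ⧸ LinearMap.range A.mulVecLin)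
  obtain ⟨y, hy⟩ : (Nat.card ((ι → ℤ) ⧸ LinearMap.range A.mulVecLin) : ℤ) • Pi.single i 1 ∈
      LinearMap.range A.mulVecLin := by
    rw [← Quotient.mk_eq_zero, Quotient.mk_smul, natCast_zsmul, card_nsmul_eq_zero']
  have := congrArg (v ⬝ᵥ ·) hy
  simp only [mulVecLin_apply, dotProduct_mulVec, hvA, zero_dotProduct, dotProduct_smul,
    dotProduct_single, mul_one, smul_eq_mul] at this
  exact mul_ne_zero (Nat.cast_ne_zero.2 hm.ne') hi this.symm

theorem card_quotient_range_mulVecLin (hA : A.det ≠ 0) :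
    Nat.card ((ι → ℤ) ⧸ LinearMap.range A.mulVecLin) = A.det.natAbs := by
  have hinj : Function.Injective A.mulVecLin := (injective_iff_map_eq_zero _).2 fun x hx =>
    by_contra fun hx0 => hA (exists_mulVec_eq_zero_iff.1 ⟨x, hx0, hx⟩)
  rw [← natAbs_det_equiv _ (LinearEquiv.ofInjective _ hinj), ← LinearMap.det_toLin' A]
  rfl

end Matrix

open Matrix

namespace ZMod

variable {N : ℕ} [NeZero N]

theorem dft_circulant_mulVec (v x : ZMod N → ℂ) : 𝓕 (circulant v *ᵥ x) = 𝓕 v * 𝓕 x := by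
  ext k
  simp only [dft_apply, mulVec, dotProduct, circulant_apply, Pi.mul_apply, smul_eq_mul,
    Finset.mul_sum, Finset.sum_mul]
  rw [Finset.sum_comm]
  refine Finset.sum_congr rfl fun j _ => ?_
  rw [← Equiv.sum_comp (Equiv.addRight j)]
  refine Finset.sum_congr rfl fun a _ => ?_
  simp only [Equiv.coe_addRight, add_sub_cancel_right, add_mul, neg_add, AddChar.map_add_eq_mul]
  ring

theorem det_circulant (v : ZMod N → ℂ) : (circulant v).det = ∏ k, 𝓕 v k := by
  have hconj : (𝓕 : (ZMod N → ℂ) ≃ₗ[ℂ] _).toLinearMap ∘ₗ toLin' (circulant v) ∘ₗ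
      (𝓕 : (ZMod N → ℂ) ≃ₗ[ℂ] _).symm.toLinearMap = toLin' (diagonal (𝓕 v)) := by
    refine LinearMap.ext fun x => ?_
    simp only [LinearMap.comp_apply, LinearEquiv.coe_coe, toLin'_apply, dft_circulant_mulVec,
      LinearEquiv.apply_symm_apply]
    exact funext fun k => (mulVec_diagonal _ _ k).symm
  rw [← LinearMap.det_toLin', ← LinearMap.det_conj _ 𝓕, hconj, LinearMap.det_toLin',
    det_diagonal]

open Complex Real in
theorem stdAddChar_natCast (k : ℕ) :
    stdAddChar (k : ZMod N) = exp (2 * π * I / N) ^ k := by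
  rw [← Int.cast_natCast, stdAddChar_coe, ← Complex.exp_nat_mul]
  push_cast
  ring_nf

end ZMod

theorem norm_add_inv_sub_one_eq_norm {𝕜 : Type*} [NormedField 𝕜] {z : 𝕜} (hz : ‖z‖ = 1) :
    ‖z + z⁻¹ - 1‖ = ‖z ^ 2 - z + 1‖ := by
  have hz0 : z ≠ 0 := norm_ne_zero_iff.1 (hz ▸ one_ne_zero)
  rw [show z ^ 2 - z + 1 = z * (z + z⁻¹ - 1) by field_simp; ring, norm_mul, hz, one_mul]

open ZMod FreeGroup PresentedGroup

section Sieradski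

variable (n : ℕ)

def sieradskiRelator (i : ZMod n) : FreeGroup (ZMod n) :=
  .of (i - 1) * .of (i + 1) * (.of i)⁻¹

def sieradskiRow (k : ZMod n) : ℤ :=
  (if k = 0 then -1 else 0) + (if k = 1 then 1 else 0) + (if k = -1 then 1 else 0)

theorem exponents_sieradskiRelator (i : ZMod n) :
    (exponents (sieradskiRelator n i)).toAdd = (circulant (sieradskiRow n)).col i := by
  funext j
  simp only [sieradskiRelator, _root_.map_mul, _root_.map_inv, exponents_of, toAdd_mul, toAdd_inv,
    toAdd_ofAdd, col_apply, circulant_apply, sieradskiRow, Pi.add_apply, Pi.neg_apply,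
    Pi.single_apply, sub_eq_iff_eq_add', add_zero, ← sub_eq_add_neg, eq_sub_iff_add_eq]
  split_ifs <;> ring

variable [NeZero n]

theorem relationModule_sieradski :
    relationModule (Set.range (sieradskiRelator n)) =
      LinearMap.range (circulant (sieradskiRow n)).mulVecLin := by
  rw [relationModule, range_mulVecLin, ← Set.range_comp]
  exact congrArg (Submodule.span ℤ ∘ Set.range) (funext (exponents_sieradskiRelator n))

theorem dft_sieradskiRow (k : ZMod n) :
    𝓕 (fun j => (sieradskiRow n j : ℂ)) k = stdAddChar k + (stdAddChar k)⁻¹ - 1 := by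
  simp only [dft_apply, sieradskiRow, Int.cast_add, apply_ite (Int.cast : ℤ → ℂ), Int.cast_neg,
    Int.cast_one, Int.cast_zero, smul_eq_mul, mul_add, mul_ite, mul_zero, Finset.sum_add_distrib,
    Finset.sum_ite_eq', Finset.mem_univ, if_true]
  simp only [zero_mul, neg_zero, AddChar.map_zero_eq_one, mul_neg, mul_one, one_mul,
    AddChar.map_neg_eq_inv, neg_mul, neg_neg]
  ring

open Complex Real in
theorem det_circulant_sieradskiRow :
    ((circulant (sieradskiRow n)).det : ℂ) =
      ∏ k ∈ Finset.range n, (exp (2 * π * I / n) ^ k + exp (2 * π * I / n) ^ (-(k : ℤ)) - 1) := by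
  rw [Int.cast_det, map_circulant, det_circulant]
  symm
  refine Finset.prod_bij' (fun k _ => (k : ZMod n)) (fun a _ => a.val)
    (fun _ _ => Finset.mem_univ _) (fun a _ => Finset.mem_range.2 a.val_lt)
    (fun k hk => val_cast_of_lt (Finset.mem_range.1 hk)) (fun a _ => natCast_zmod_val a)
    fun k _ => ?_
  rw [dft_sieradskiRow, stdAddChar_natCast, _root_.zpow_neg, zpow_natCast]

end Sieradski

/-- H₁ of the Sieradski manifolds: the abelianization of the Sieradski group is the
cokernel of the circulant matrix with first row (-1, 1, 0, ..., 0, 1); when finite,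
its order is |∏ₖ (ωᵏ + ω⁻ᵏ - 1)|, which equals |Res(t² - t + 1, tⁿ - 1)|. -/
theorem stmt_12 (n : ℕ) (hn : 1 ≤ n) :
    haveI : NeZero n := ⟨by omega⟩
    let rels : Set (FreeGroup (ZMod n)) :=
      Set.range fun i : ZMod n =>
        FreeGroup.of (i - 1) * FreeGroup.of (i + 1) * (FreeGroup.of i)⁻¹
    let M : Matrix (ZMod n) (ZMod n) ℤ :=
      Matrix.circulant fun k : ZMod n =>
        (if k = 0 then (-1 : ℤ) else 0) + (if k = 1 then 1 else 0) + (if k = -1 then 1 else 0)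
    let ω : ℂ := Complex.exp (2 * Real.pi * Complex.I / n)
    Nonempty (Additive (Abelianization (PresentedGroup rels)) ≃+
        ((ZMod n → ℤ) ⧸ LinearMap.range M.mulVecLin)) ∧
      (Finite (Abelianization (PresentedGroup rels)) →
        (Nat.card (Abelianization (PresentedGroup rels)) : ℝ) =
          ‖∏ k ∈ Finset.range n, (ω ^ k + ω ^ (-(k : ℤ)) - 1)‖) ∧
      ‖∏ k ∈ Finset.range n, (ω ^ k + ω ^ (-(k : ℤ)) - 1)‖ =
        ‖∏ k ∈ Finset.range n, ((ω ^ k) ^ 2 - ω ^ k + 1)‖ := by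
  have : NeZero n := ⟨by omega⟩
  intro rels M ω
  let e : Additive (Abelianization (PresentedGroup rels)) ≃+
      (ZMod n → ℤ) ⧸ LinearMap.range M.mulVecLin :=
    (abelianizationEquivQuotient _).trans
      (quotEquivOfEq _ _ (relationModule_sieradski n)).toAddEquiv
  have hω : ∀ k : ℕ, ‖ω ^ k‖ = 1 := fun k => by
    rw [norm_pow, (Complex.isPrimitiveRoot_exp n (NeZero.ne n)).norm'_eq_one (NeZero.ne n), one_pow]
  have hdet : (M.det : ℂ) = ∏ k ∈ Finset.range n, (ω ^ k + ω ^ (-(k : ℤ)) - 1) :=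
    det_circulant_sieradskiRow n
  refine ⟨⟨e⟩, fun _ => ?_, ?_⟩
  · have : Finite ((ZMod n → ℤ) ⧸ LinearMap.range M.mulVecLin) :=
      .of_equiv _ (Additive.ofMul.trans e.toEquiv)
    rw [Nat.card_congr (Additive.ofMul.trans e.toEquiv),
      card_quotient_range_mulVecLin M (det_ne_zero_of_finite_quotient_range M), ← hdet,
      Complex.norm_intCast, Nat.cast_natAbs, Int.cast_abs]
  · simp only [norm_prod, norm_add_inv_sub_one_eq_norm, _root_.zpow_neg, zpow_natCast, hω]
end

section
/- For n = 1, the group presented by generators x_1, x_2 and relators x_1^q x_2^{-r} x_1^{-q} and x_2^s x_1^p x_2^{-s} (with gcd(p,q)=gcd(r,s)=1) is isomorphic to the free product Z/p * Z/r (where Z/0 = Z and Z/1 = 1). -/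
/-!
Conjugating the first relator by `x₁^(-q)` and the second by `x₂^(-s)`, and inverting the first,
turns the relators into `x₁^p` and `x₂^r` without changing their normal closure. The presentation
`⟨x₁, x₂ | x₁^p, x₂^r⟩` is the free product of the one-relator presentations `⟨x | x^p⟩` and
`⟨x | x^r⟩` of the cyclic groups `ℤ/|p|` and `ℤ/|r|`.
-/

namespace Subgroup

variable {G : Type*} [Group G]

theorem normalClosure_singleton_inv (a : G) : normalClosure {a⁻¹} = normalClosure {a} :=
  le_antisymm
    (normalClosure_le_normal <| Set.singleton_subset_iff.2 <| inv_mem <| subset_normalClosure rfl)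
    (normalClosure_le_normal <| Set.singleton_subset_iff.2 <| by
      simpa using inv_mem (subset_normalClosure (Set.mem_singleton a⁻¹)))

theorem normalClosure_singleton_conj (g a : G) :
    normalClosure {g * a * g⁻¹} = normalClosure {a} := by
  have : conjugatesOf (g * a * g⁻¹) = conjugatesOf a :=
    (isConj_iff_conjugatesOf_eq.mp (isConj_iff.mpr ⟨g, rfl⟩)).symm
  simp [normalClosure, Group.conjugatesOfSet, this]

theorem normalClosure_conj_zpow_pair (x y : G) (p q r s : ℤ) :
    normalClosure {x ^ q * y ^ (-r) * x ^ (-q), y ^ s * x ^ p * y ^ (-s)} =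
      normalClosure {x ^ p, y ^ r} := by
  simp only [Set.insert_eq, normalClosure_union, zpow_neg, normalClosure_singleton_conj,
    normalClosure_singleton_inv]
  exact sup_comm _ _

end Subgroup

section ZModLift

variable {G : Type*} [Group G] {n : ℤ}

def zmodLift (g : G) (hg : g ^ n = 1) : Multiplicative (ZMod n.natAbs) →* G :=
  AddMonoidHom.toMultiplicativeLeft <| ZMod.lift n.natAbs
    ⟨zmultiplesHom _ (Additive.ofMul g), by simpa [← ofMul_zpow] using pow_natAbs_eq_one.mpr hg⟩

theorem zmodLift_ofAdd_intCast (g : G) (hg : g ^ n = 1) (k : ℤ) :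
    zmodLift g hg (Multiplicative.ofAdd (k : ZMod n.natAbs)) = g ^ k := by
  simp [zmodLift]

theorem zmodLift_ofAdd_one (g : G) (hg : g ^ n = 1) :
    zmodLift g hg (Multiplicative.ofAdd 1) = g := by
  simpa using zmodLift_ofAdd_intCast g hg 1

theorem ofAdd_one_zpow_self (n : ℤ) : Multiplicative.ofAdd (1 : ZMod n.natAbs) ^ n = 1 := by
  rw [← ofAdd_zsmul, zsmul_one, ofAdd_eq_one, ZMod.intCast_zmod_eq_zero_iff_dvd]
  exact Int.natAbs_dvd.mpr dvd_rfl

theorem MonoidHom.ext_multiplicative_zmod {m : ℕ} {f f' : Multiplicative (ZMod m) →* G}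
    (h : f (Multiplicative.ofAdd 1) = f' (Multiplicative.ofAdd 1)) : f = f' := by
  refine MonoidHom.ext fun x => ?_
  obtain ⟨k, hk⟩ := ZMod.intCast_surjective (Multiplicative.toAdd x)
  have hx : x = Multiplicative.ofAdd (1 : ZMod m) ^ k := by
    rw [← ofAdd_zsmul, zsmul_one, hk, ofAdd_toAdd]
  rw [hx, map_zpow, map_zpow, h]

end ZModLift

namespace PresentedGroup

variable {α : Type*}

def mulEquivOfNormalClosureEq {rels rels' : Set (FreeGroup α)}
    (h : Subgroup.normalClosure rels = Subgroup.normalClosure rels') :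
    PresentedGroup rels ≃* PresentedGroup rels' :=
  QuotientGroup.quotientMulEquivOfEq h

theorem of_zpow_eq_one {rels : Set (FreeGroup α)} {a : α} {n : ℤ}
    (h : FreeGroup.of a ^ n ∈ rels) : (of a : PresentedGroup rels) ^ n = 1 := by
  rw [← one_of_mem h, map_zpow]
  rfl

def cyclicMulEquiv (n : ℤ) :
    PresentedGroup ({FreeGroup.of () ^ n} : Set (FreeGroup Unit)) ≃*
      Multiplicative (ZMod n.natAbs) :=
  MonoidHom.toMulEquiv
    (toGroup (f := fun _ => Multiplicative.ofAdd 1) <| by simpa using ofAdd_one_zpow_self n)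
    (zmodLift (of ()) (of_zpow_eq_one (Set.mem_singleton _)))
    (ext fun _ => by rw [MonoidHom.comp_apply, toGroup.of, zmodLift_ofAdd_one]; rfl)
    (MonoidHom.ext_multiplicative_zmod <| by
      rw [MonoidHom.comp_apply, zmodLift_ofAdd_one, toGroup.of]; rfl)

def finTwoPowMulEquivCoprod (p r : ℤ) :
    PresentedGroup ({FreeGroup.of 0 ^ p, FreeGroup.of 1 ^ r} : Set (FreeGroup (Fin 2))) ≃*
      Monoid.Coprod (Multiplicative (ZMod p.natAbs)) (Multiplicative (ZMod r.natAbs)) :=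
  let e : Fin 2 ≃ Unit ⊕ Unit := finTwoEquiv.trans Equiv.boolEquivPUnitSumPUnit
  have hrels : FreeGroup.freeGroupCongr e '' {FreeGroup.of 0 ^ p, FreeGroup.of 1 ^ r} =
      FreeGroup.map Sum.inl '' {FreeGroup.of () ^ p} ∪
        FreeGroup.map Sum.inr '' {FreeGroup.of () ^ r} := by
    have he0 : e 0 = .inl () := rfl
    have he1 : e 1 = .inr () := rfl
    simp only [Set.image_pair, Set.image_singleton, map_zpow, FreeGroup.freeGroupCongr_apply,
      FreeGroup.map.of, he0, he1, Set.insert_eq]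
  (equivPresentedGroup _ e).trans <|
    (mulEquivOfNormalClosureEq (congrArg _ hrels)).trans <|
      (coprodPresentations _ _).trans <|
        MulEquiv.coprodCongr (cyclicMulEquiv p) (cyclicMulEquiv r)

end PresentedGroup

theorem stmt_15_general (p q r s : ℤ) :
    let x : Fin 2 → FreeGroup (Fin 2) := FreeGroup.of
    let rels : Set (FreeGroup (Fin 2)) :=
      { (x 0) ^ q * (x 1) ^ (-r) * (x 0) ^ (-q), (x 1) ^ s * (x 0) ^ p * (x 1) ^ (-s) }
    Nonempty (PresentedGroup rels ≃*
      Monoid.Coprod (Multiplicative (ZMod p.natAbs)) (Multiplicative (ZMod r.natAbs))) :=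
  ⟨(PresentedGroup.mulEquivOfNormalClosureEq
      (Subgroup.normalClosure_conj_zpow_pair _ _ p q r s)).trans
    (PresentedGroup.finTwoPowMulEquivCoprod p r)⟩

/-- π₁(M₁(p/q, r/s)) ≅ ℤ/p * ℤ/r: the group ⟨x₁, x₂ | x₁^q x₂^{-r} x₁^{-q}, x₂^s x₁^p x₂^{-s}⟩
is the free product of cyclic groups of orders |p| and |r| (with ℤ/0 = ℤ). -/
theorem stmt_15 (p q r s : ℤ) (hpq : Int.gcd p q = 1) (hrs : Int.gcd r s = 1) :
    let x : Fin 2 → FreeGroup (Fin 2) := FreeGroup.of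
    let rels : Set (FreeGroup (Fin 2)) :=
      { (x 0) ^ q * (x 1) ^ (-r) * (x 0) ^ (-q), (x 1) ^ s * (x 0) ^ p * (x 1) ^ (-s) }
    Nonempty (PresentedGroup rels ≃*
      Monoid.Coprod (Multiplicative (ZMod p.natAbs)) (Multiplicative (ZMod r.natAbs))) :=
  stmt_15_general p q r s
end
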